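/- arXiv:2204.07295 — 2 statements merged into one kernel-verified Lean document; each statement's English description precedes it below -/
import Mathlib

section
/- Let s > 0 and let x, y ∈ ℝ² with |y − (x − s e₂)| < s, where e₂ = (0,1) (this forces y ≠ x). Then e^{−τ/(2s)} |v_τ(y;x)| → ∞ as τ → ∞. -/
/-- The Kelvin-transformed complex geometrical optics solution
`v_τ(y;x) = exp(−iτ/((y₁−x₁)+i(y₂−x₂)))`. -/
noncomputable def vtau (τ : ℝ) (x y : ℝ × ℝ) : ℂ :=
  Complex.exp (-(Complex.I * (τ : ℂ)) / (((y.1 - x.1 : ℝ) : ℂ) + Complex.I * ((y.2 - x.2 : ℝ) : ℂ)))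

open Complex Filter

lemma re_neg_I_mul_div (τ a b : ℝ) :
    (-(I * τ) / (a + I * b)).re = -τ * b / (a ^ 2 + b ^ 2) := by
  simp only [div_re, neg_re, mul_re, I_re, ofReal_re, zero_mul, I_im, ofReal_im, mul_zero,
    sub_self, neg_zero, add_re, add_zero, normSq_apply, add_im, mul_im, one_mul, zero_add,
    zero_div, neg_im, neg_mul]
  ring

lemma norm_vtau (τ : ℝ) (x y : ℝ × ℝ) :
    ‖vtau τ x y‖ = Real.exp (-τ * (y.2 - x.2) / ((y.1 - x.1) ^ 2 + (y.2 - x.2) ^ 2)) := by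
  rw [vtau, norm_exp, re_neg_I_mul_div]

/-- The open disk of radius `s` centred at `-s e₂` is mapped by `z ↦ 1/z` into the half-plane
`Im w > 1/(2s)`. -/
lemma one_div_two_mul_lt_of_sq_add_sq_lt {s a b : ℝ} (hs : 0 < s)
    (h : a ^ 2 + (b + s) ^ 2 < s ^ 2) : 1 / (2 * s) < -b / (a ^ 2 + b ^ 2) := by
  have hr : a ^ 2 + b ^ 2 < -2 * b * s := by nlinarith
  have hb : b ≠ 0 := by
    rintro rfl
    nlinarith [sq_nonneg a]
  have hr_pos : 0 < a ^ 2 + b ^ 2 := by positivity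
  rw [div_lt_div_iff₀ (by positivity) hr_pos]
  linarith

theorem stmt2_general (s : ℝ) (x y : ℝ × ℝ)
    (h : Real.sqrt ((y.1 - x.1) ^ 2 + (y.2 - x.2 + s) ^ 2) < s) :
    Filter.Tendsto (fun τ : ℝ => Real.exp (-τ / (2 * s)) * ‖vtau τ x y‖)
      Filter.atTop Filter.atTop := by
  set a := y.1 - x.1
  set b := y.2 - x.2
  have hs : 0 < s := (Real.sqrt_nonneg _).trans_lt h
  have hc : 0 < -b / (a ^ 2 + b ^ 2) - 1 / (2 * s) :=
    sub_pos.mpr (one_div_two_mul_lt_of_sq_add_sq_lt hs ((Real.sqrt_lt' hs).mp h))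
  have h_eq : ∀ τ : ℝ, Real.exp (-τ / (2 * s)) * ‖vtau τ x y‖
      = Real.exp ((-b / (a ^ 2 + b ^ 2) - 1 / (2 * s)) * τ) := by
    intro τ
    rw [norm_vtau, ← Real.exp_add]
    congr 1
    ring
  simp only [h_eq]
  exact Real.tendsto_exp_atTop.comp (tendsto_id.const_mul_atTop hc)

theorem stmt2 (s : ℝ) (hs : 0 < s) (x y : ℝ × ℝ)
    (h : Real.sqrt ((y.1 - x.1) ^ 2 + (y.2 - x.2 + s) ^ 2) < s) :
    Filter.Tendsto (fun τ : ℝ => Real.exp (-τ / (2 * s)) * ‖vtau τ x y‖)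
      Filter.atTop Filter.atTop :=
  stmt2_general s x y h
end

section
/- Fix x ∈ ℝ², y ≠ x, and let 𝐯_τ(y;x) := (v_τ(y;x), i·v_τ(y;x)). The derivative of 𝐯_τ(y;x) with respect to τ is 𝐯'_τ(y;x) = (−i/((y₁−x₁)+i(y₂−x₂))) 𝐯_τ(y;x), and its stress satisfies σ(𝐯'_τ(·;x))(y) e₂ = 2μ (1 − τ w) w² 𝐯_τ(y;x), where w := ((y₂−x₂) + i(y₁−x₁))/|y−x|² and e₂ = (0,1). -/
/-- Partial derivative with respect to the first variable. -/
noncomputable def pd1 (f : ℝ × ℝ → ℂ) (p : ℝ × ℝ) : ℂ := fderiv ℝ f p (1, 0)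

/-- Partial derivative with respect to the second variable. -/
noncomputable def pd2 (f : ℝ × ℝ → ℂ) (p : ℝ × ℝ) : ℂ := fderiv ℝ f p (0, 1)

/-- The second column `σ(u) e₂ = (σ₁₂, σ₂₂)` of the stress tensor
`σ(u) = λ tr(ε(u)) I + 2μ ε(u)`, `ε(u) = (∇u + (∇u)ᵀ)/2`, of a field `u : ℝ² → ℂ²`. -/
noncomputable def sigmaE2 (lam μ : ℝ) (u : ℝ × ℝ → ℂ × ℂ) (y : ℝ × ℝ) : ℂ × ℂ :=
  ((μ : ℂ) * (pd1 (fun z => (u z).2) y + pd2 (fun z => (u z).1) y),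
   (lam : ℂ) * (pd1 (fun z => (u z).1) y + pd2 (fun z => (u z).2) y)
     + 2 * (μ : ℂ) * pd2 (fun z => (u z).2) y)

/-- `w = ((y₂−x₂) + i(y₁−x₁))/|y−x|²`, the dot product of `(y−x)/|y−x|²` with `e₂ + i e₁`. -/
noncomputable def wfun (x y : ℝ × ℝ) : ℂ :=
  (((y.2 - x.2 : ℝ) : ℂ) + Complex.I * ((y.1 - x.1 : ℝ) : ℂ))
    / (((y.1 - x.1) ^ 2 + (y.2 - x.2) ^ 2 : ℝ) : ℂ)

/-!
Write `ζ = (y₁ - x₁) + i (y₂ - x₂)`. Both `𝐯_τ` and its `τ`-derivative have the form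
`g(ζ) (1, i)` with `g` holomorphic; for such a field the Cauchy–Riemann relation `∂₂ = i ∂₁` makes
it divergence free, and `σ e₂ = 2μ i g'(ζ) (1, i)`. For `g(ζ) = -(i/ζ) exp(-iτ/ζ)` and `w = i/ζ`
one computes `i g'(ζ) = (1 - τ w) w² exp(-iτ/ζ)`.
-/

open Complex

noncomputable def complexOffset (x z : ℝ × ℝ) : ℂ :=
  ((z.1 - x.1 : ℝ) : ℂ) + I * ((z.2 - x.2 : ℝ) : ℂ)

lemma complexOffset_eq (x z : ℝ × ℝ) : complexOffset x z = equivRealProdCLM.symm (z - x) := by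
  rw [equivRealProdCLM_symm_apply, complexOffset, Prod.fst_sub, Prod.snd_sub, mul_comm]

lemma complexOffset_ne_zero {x z : ℝ × ℝ} (h : z ≠ x) : complexOffset x z ≠ 0 := by
  rw [complexOffset_eq, ne_eq, ContinuousLinearEquiv.map_eq_zero_iff, sub_eq_zero]
  exact h

lemma hasFDerivAt_complexOffset (x z : ℝ × ℝ) :
    HasFDerivAt (complexOffset x) (equivRealProdCLM.symm : (ℝ × ℝ) →L[ℝ] ℂ) z := by
  simp_rw [funext (complexOffset_eq x)]
  exact (equivRealProdCLM.symm : (ℝ × ℝ) →L[ℝ] ℂ).hasFDerivAt.comp z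
    ((hasFDerivAt_id z).sub_const x)

lemma pd_comp_complexOffset {g : ℂ → ℂ} {g' : ℂ} {x y : ℝ × ℝ}
    (hg : HasDerivAt g g' (complexOffset x y)) :
    pd1 (fun z => g (complexOffset x z)) y = g' ∧
      pd2 (fun z => g (complexOffset x z)) y = I * g' := by
  have h := (hg.comp_hasFDerivAt y (hasFDerivAt_complexOffset x y)).fderiv
  simp only [Function.comp_def] at h
  simp [pd1, pd2, h, equivRealProdCLM_symm_apply, mul_comm]

lemma sigmaE2_comp_complexOffset (lam μ : ℝ) {g : ℂ → ℂ} {g' : ℂ} {x y : ℝ × ℝ}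
    (hg : HasDerivAt g g' (complexOffset x y)) :
    sigmaE2 lam μ (fun z => (g (complexOffset x z), I * g (complexOffset x z))) y
      = (2 * μ * I * g', I * (2 * μ * I * g')) := by
  obtain ⟨h1, h2⟩ := pd_comp_complexOffset hg
  obtain ⟨h1', h2'⟩ := pd_comp_complexOffset (hg.const_mul I)
  simp only [sigmaE2, h1, h2, h1', h2', Prod.mk.injEq]
  constructor
  · ring
  · linear_combination (lam : ℂ) * g' * I_sq

lemma hasDerivAt_vtau (τ : ℝ) (x y : ℝ × ℝ) :
    HasDerivAt (fun t : ℝ => vtau t x y) (-I / complexOffset x y * vtau τ x y) τ := by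
  have h := ((hasDerivAt_id τ).ofReal_comp.mul_const (-I / complexOffset x y)).cexp
  have hexp : ∀ t : ℝ, vtau t x y = exp ((t : ℂ) * (-I / complexOffset x y)) := fun t => by
    rw [vtau, ← complexOffset.eq_1]; ring_nf
  simp only [hexp, id, ofReal_one, one_mul] at h ⊢
  rw [mul_comm]; exact h

lemma hasDerivAt_neg_I_div_mul_exp (τ : ℝ) {w : ℂ} (hw : w ≠ 0) :
    HasDerivAt (fun w : ℂ => -I / w * exp (-(I * τ) / w))
      (exp (-(I * τ) / w) * (τ / w ^ 3 + I / w ^ 2)) w := by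
  have hinv := hasDerivAt_inv hw
  simp only [div_eq_mul_inv]
  refine ((hinv.const_mul (-I)).mul (hinv.const_mul (-(I * τ))).cexp).congr_deriv ?_
  field_simp
  linear_combination -(τ : ℂ) * I_sq

lemma normSq_complexOffset (x z : ℝ × ℝ) :
    normSq (complexOffset x z) = (z.1 - x.1) ^ 2 + (z.2 - x.2) ^ 2 := by
  simp [complexOffset, normSq_apply, sq]

lemma wfun_eq_I_div {x y : ℝ × ℝ} (h : y ≠ x) : wfun x y = I / complexOffset x y := by
  have hnorm : (((y.1 - x.1) ^ 2 + (y.2 - x.2) ^ 2 : ℝ) : ℂ) ≠ 0 := by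
    rw [← normSq_complexOffset]
    exact_mod_cast (normSq_pos.2 (complexOffset_ne_zero h)).ne'
  rw [wfun, div_eq_div_iff hnorm (complexOffset_ne_zero h), complexOffset]
  push_cast
  linear_combination ((y.1 - x.1 : ℂ) * (y.2 - x.2)) * I_sq

theorem stmt6_general (x y : ℝ × ℝ) (hxy : y ≠ x) (lam μ : ℝ) :
    ∀ τ : ℝ, 0 < τ →
      -- the τ-derivative of 𝐯_τ(y;x) is (−i/((y₁−x₁)+i(y₂−x₂))) 𝐯_τ(y;x)
      HasDerivAt (fun t : ℝ => ((vtau t x y, Complex.I * vtau t x y) : ℂ × ℂ))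
        ((-Complex.I / (((y.1 - x.1 : ℝ) : ℂ) + Complex.I * ((y.2 - x.2 : ℝ) : ℂ)))
          • ((vtau τ x y, Complex.I * vtau τ x y) : ℂ × ℂ)) τ ∧
      -- and the stress of the field 𝐯'_τ(·;x) satisfies σ(𝐯'_τ(·;x))(y) e₂ = 2μ(1−τw)w²𝐯_τ(y;x)
      sigmaE2 lam μ (fun z =>
          (-Complex.I / (((z.1 - x.1 : ℝ) : ℂ) + Complex.I * ((z.2 - x.2 : ℝ) : ℂ)))
            • ((vtau τ x z, Complex.I * vtau τ x z) : ℂ × ℂ)) y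
        = (2 * (μ : ℂ) * (1 - (τ : ℂ) * wfun x y) * (wfun x y) ^ 2 * vtau τ x y,
           2 * (μ : ℂ) * (1 - (τ : ℂ) * wfun x y) * (wfun x y) ^ 2
             * (Complex.I * vtau τ x y)) := by
  intro τ _
  refine ⟨?_, ?_⟩
  · have hv := hasDerivAt_vtau τ x y
    convert hv.prodMk (hv.const_mul I) using 1
    simp only [← complexOffset.eq_1, Prod.smul_mk, smul_eq_mul]
    ring_nf
  · have hc := complexOffset_ne_zero hxy
    have hfield : (fun z => (-I / complexOffset x z) • (vtau τ x z, I * vtau τ x z))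
        = fun z => (-I / complexOffset x z * exp (-(I * τ) / complexOffset x z),
            I * (-I / complexOffset x z * exp (-(I * τ) / complexOffset x z))) := by
      funext z; simp only [Prod.smul_mk, smul_eq_mul, vtau, complexOffset]; ring_nf
    simp only [← complexOffset.eq_1]
    rw [hfield, sigmaE2_comp_complexOffset lam μ (hasDerivAt_neg_I_div_mul_exp τ hc),
      wfun_eq_I_div hxy, vtau, ← complexOffset.eq_1, Prod.mk.injEq]
    set c := complexOffset x y
    set E := exp (-(I * τ) / c)
    have key : 2 * μ * I * (E * (τ / c ^ 3 + I / c ^ 2))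
        = 2 * μ * (1 - τ * (I / c)) * (I / c) ^ 2 * E := by
      field_simp
      linear_combination (μ * E * τ : ℂ) * I_sq
    exact ⟨key, by rw [key]; ring⟩

theorem stmt6 (x y : ℝ × ℝ) (hxy : y ≠ x) (lam μ : ℝ) (hμ : 0 < μ) (hlm : 0 < lam + μ) :
    ∀ τ : ℝ, 0 < τ →
      -- the τ-derivative of 𝐯_τ(y;x) is (−i/((y₁−x₁)+i(y₂−x₂))) 𝐯_τ(y;x)
      HasDerivAt (fun t : ℝ => ((vtau t x y, Complex.I * vtau t x y) : ℂ × ℂ))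
        ((-Complex.I / (((y.1 - x.1 : ℝ) : ℂ) + Complex.I * ((y.2 - x.2 : ℝ) : ℂ)))
          • ((vtau τ x y, Complex.I * vtau τ x y) : ℂ × ℂ)) τ ∧
      -- and the stress of the field 𝐯'_τ(·;x) satisfies σ(𝐯'_τ(·;x))(y) e₂ = 2μ(1−τw)w²𝐯_τ(y;x)
      sigmaE2 lam μ (fun z =>
          (-Complex.I / (((z.1 - x.1 : ℝ) : ℂ) + Complex.I * ((z.2 - x.2 : ℝ) : ℂ)))
            • ((vtau τ x z, Complex.I * vtau τ x z) : ℂ × ℂ)) y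
        = (2 * (μ : ℂ) * (1 - (τ : ℂ) * wfun x y) * (wfun x y) ^ 2 * vtau τ x y,
           2 * (μ : ℂ) * (1 - (τ : ℂ) * wfun x y) * (wfun x y) ^ 2
             * (Complex.I * vtau τ x y)) :=
  stmt6_general x y hxy lam μ
end
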